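/- arXiv:2208.04113 — 5 statements merged into one kernel-verified Lean document; each statement's English description precedes it below -/
import Mathlib

section
/- Let M : Fin n → Fin n → Fin n → ℝ be a triply stochastic array, meaning for each fixed pair of indices the sum over the remaining index equals 1 (i.e., ∑_k M i j k = 1, ∑_j M i j k = 1, ∑_i M i j k = 1 for all valid fixed indices). Let a, b, c ≤ n, let c₀ = ∑_{i<a, j<b, k<c} M i j k and c₃ = ∑_{i≥a, j≥b, k≥c} M i j k. Then c₀ + c₃ = n² - (a+b+c)·n + (ab+bc+ca). -/
open Finset

private lemma card_filter_val_lt' (n a : ℕ) (ha : a ≤ n) :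
    ((Finset.univ.filter fun i : Fin n => i.val < a)).card = a := by
  have h : (Finset.univ.filter fun i : Fin n => i.val < a)
      = Finset.attachFin (Finset.range a)
        (fun m hm => lt_of_lt_of_le (Finset.mem_range.mp hm) ha) := by
    ext i
    simp [Finset.mem_attachFin]
  rw [h, Finset.card_attachFin, Finset.card_range]

private lemma sum_filter_not_eq' {n : ℕ} (p : Fin n → Prop) [DecidablePred p] (f : Fin n → ℝ) :
    ∑ i ∈ Finset.univ.filter (fun i => ¬ p i), f i
      = (∑ i, f i) - ∑ i ∈ Finset.univ.filter p, f i := by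
  have := Finset.sum_filter_add_sum_filter_not Finset.univ p f
  linarith

theorem triply_stochastic_cruse (n a b c : ℕ) (ha : a ≤ n) (hb : b ≤ n) (hc : c ≤ n)
    (M : Fin n → Fin n → Fin n → ℝ)
    (h1 : ∀ i j, ∑ k, M i j k = 1) (h2 : ∀ i k, ∑ j, M i j k = 1)
    (h3 : ∀ j k, ∑ i, M i j k = 1) :
    (∑ i ∈ Finset.univ.filter fun i : Fin n => i.val < a,
        ∑ j ∈ Finset.univ.filter fun j : Fin n => j.val < b,
          ∑ k ∈ Finset.univ.filter fun k : Fin n => k.val < c, M i j k) +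
      (∑ i ∈ Finset.univ.filter fun i : Fin n => a ≤ i.val,
        ∑ j ∈ Finset.univ.filter fun j : Fin n => b ≤ j.val,
          ∑ k ∈ Finset.univ.filter fun k : Fin n => c ≤ k.val, M i j k) =
      (n : ℝ) ^ 2 - ((a : ℝ) + b + c) * n + ((a : ℝ) * b + (b : ℝ) * c + (c : ℝ) * a) := by
  have hle : ∀ m : ℕ, (Finset.univ.filter fun i : Fin n => m ≤ i.val)
      = Finset.univ.filter (fun i : Fin n => ¬ i.val < m) := by
    intro m; ext i; simp [not_lt]
  set A := Finset.univ.filter fun i : Fin n => i.val < a with hAdef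
  set B := Finset.univ.filter fun j : Fin n => j.val < b with hBdef
  set C := Finset.univ.filter fun k : Fin n => k.val < c with hCdef
  have hcA : (A.card : ℝ) = a := by rw [hAdef, card_filter_val_lt' n a ha]
  have hcB : (B.card : ℝ) = b := by rw [hBdef, card_filter_val_lt' n b hb]
  have hcC : (C.card : ℝ) = c := by rw [hCdef, card_filter_val_lt' n c hc]
  -- innermost sum over complement of C
  have hsC : ∀ i j, ∑ k ∈ Finset.univ.filter (fun k : Fin n => c ≤ k.val), M i j k
      = 1 - ∑ k ∈ C, M i j k := by
    intro i j
    rw [hle c, sum_filter_not_eq', h1]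
  -- ∑ j, ∑ k ∈ C, M i j k = c
  have hjC : ∀ i, ∑ j, ∑ k ∈ C, M i j k = c := by
    intro i
    rw [Finset.sum_comm]
    rw [Finset.sum_congr rfl (fun k _ => h2 i k), Finset.sum_const, nsmul_eq_mul, mul_one, hcC]
  -- middle sum
  have step2 : ∀ i, (∑ j ∈ Finset.univ.filter (fun j : Fin n => b ≤ j.val),
      ∑ k ∈ Finset.univ.filter (fun k : Fin n => c ≤ k.val), M i j k)
      = ((n : ℝ) - b - c) + ∑ j ∈ B, ∑ k ∈ C, M i j k := by
    intro i
    simp only [hsC]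
    rw [hle b, sum_filter_not_eq']
    rw [Finset.sum_sub_distrib, Finset.sum_sub_distrib, Finset.sum_const, Finset.sum_const,
      Finset.card_univ, Fintype.card_fin, nsmul_eq_mul, nsmul_eq_mul, mul_one, mul_one,
      hjC i, hcB]
    ring
  -- ∑ i, ∑ j ∈ B, ∑ k ∈ C, M i j k = b * c
  have hg : ∑ i, ∑ j ∈ B, ∑ k ∈ C, M i j k = (b : ℝ) * c := by
    rw [Finset.sum_comm]
    have : ∀ j ∈ B, (∑ i, ∑ k ∈ C, M i j k) = (c : ℝ) := by
      intro j _
      rw [Finset.sum_comm]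
      rw [Finset.sum_congr rfl (fun k _ => h3 j k), Finset.sum_const, nsmul_eq_mul, mul_one, hcC]
    rw [Finset.sum_congr rfl this, Finset.sum_const, nsmul_eq_mul, hcB]
  -- outer sum
  have hterm2 : (∑ i ∈ Finset.univ.filter fun i : Fin n => a ≤ i.val,
        ∑ j ∈ Finset.univ.filter fun j : Fin n => b ≤ j.val,
          ∑ k ∈ Finset.univ.filter fun k : Fin n => c ≤ k.val, M i j k)
      = ((n : ℝ) - a) * ((n : ℝ) - b - c) + (b : ℝ) * c
        - ∑ i ∈ A, ∑ j ∈ B, ∑ k ∈ C, M i j k := by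
    rw [Finset.sum_congr rfl (fun i _ => step2 i)]
    rw [hle a, sum_filter_not_eq']
    rw [Finset.sum_add_distrib, Finset.sum_add_distrib, Finset.sum_const, Finset.sum_const,
      Finset.card_univ, Fintype.card_fin, nsmul_eq_mul, nsmul_eq_mul, hg, ← hAdef, hcA]
    ring
  rw [hterm2]
  ring
end

section
/- Let L : Fin n → Fin n → Fin n be a Latin square (for each i the map j ↦ L i j is a bijection, and for each j the map i ↦ L i j is a bijection). Let a, b, c ≤ n. Let c₀ = |{(i,j) : i < a, j < b, L i j < c}| and c₃ = |{(i,j) : i ≥ a, j ≥ b, L i j ≥ c}|. Then (c₀ : ℤ) + c₃ = n² - (a+b+c)·n + (ab+bc+ca). -/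
lemma card_lt_aux (n c : ℕ) (hc : c ≤ n) :
    (Finset.univ.filter fun k : Fin n => k.val < c).card = c := by
  rcases eq_or_lt_of_le hc with h | h
  · subst h
    simp [Finset.filter_true_of_mem, Fin.is_lt]
  · have : (Finset.univ.filter fun k : Fin n => k.val < c) = Finset.Iio ⟨c, h⟩ := by
      ext k; simp [Fin.lt_def]
    rw [this, Fin.card_Iio]

lemma sum_ind_lt (n c : ℕ) (hc : c ≤ n) :
    ∑ k : Fin n, (if k.val < c then (1:ℤ) else 0) = c := by
  rw [Finset.sum_ite, Finset.sum_const, Finset.sum_const]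
  simp [card_lt_aux n c hc]

lemma sum_ind_bij (n c : ℕ) (hc : c ≤ n) (g : Fin n → Fin n) (hg : Function.Bijective g) :
    ∑ j : Fin n, (if (g j).val < c then (1:ℤ) else 0) = c := by
  rw [← sum_ind_lt n c hc]
  exact Fintype.sum_bijective g hg _ _ (fun j => rfl)

theorem latin_square_stuffed_rbc (n a b c : ℕ) (ha : a ≤ n) (hb : b ≤ n) (hc : c ≤ n)
    (L : Fin n → Fin n → Fin n)
    (hrow : ∀ i, Function.Bijective (L i))
    (hcol : ∀ j, Function.Bijective fun i => L i j) :
    ((Finset.univ.filter fun p : Fin n × Fin n =>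
        p.1.val < a ∧ p.2.val < b ∧ (L p.1 p.2).val < c).card : ℤ) +
      ((Finset.univ.filter fun p : Fin n × Fin n =>
        a ≤ p.1.val ∧ b ≤ p.2.val ∧ c ≤ (L p.1 p.2).val).card : ℤ) =
      (n : ℤ) ^ 2 - ((a : ℤ) + b + c) * n + ((a : ℤ) * b + (b : ℤ) * c + (c : ℤ) * a) := by
  set x : Fin n × Fin n → ℤ := fun p => if p.1.val < a then 1 else 0 with hx
  set y : Fin n × Fin n → ℤ := fun p => if p.2.val < b then 1 else 0 with hy
  set z : Fin n × Fin n → ℤ := fun p => if (L p.1 p.2).val < c then 1 else 0 with hz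
  have hc0 : ((Finset.univ.filter fun p : Fin n × Fin n =>
      p.1.val < a ∧ p.2.val < b ∧ (L p.1 p.2).val < c).card : ℤ) =
      ∑ p : Fin n × Fin n, x p * y p * z p := by
    rw [Finset.card_filter]
    push_cast
    refine Finset.sum_congr rfl fun p _ => ?_
    simp only [hx, hy, hz]
    by_cases h1 : p.1.val < a <;> by_cases h2 : p.2.val < b <;>
      by_cases h3 : (L p.1 p.2).val < c <;> simp [h1, h2, h3]
  have hc3 : ((Finset.univ.filter fun p : Fin n × Fin n =>
      a ≤ p.1.val ∧ b ≤ p.2.val ∧ c ≤ (L p.1 p.2).val).card : ℤ) =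
      ∑ p : Fin n × Fin n, (1 - x p) * (1 - y p) * (1 - z p) := by
    rw [Finset.card_filter]
    push_cast
    refine Finset.sum_congr rfl fun p _ => ?_
    simp only [hx, hy, hz]
    by_cases h1 : p.1.val < a <;> by_cases h2 : p.2.val < b <;>
      by_cases h3 : (L p.1 p.2).val < c <;>
      simp [h1, h2, h3, not_lt.mp, Nat.not_le.mpr, not_lt.symm]
  rw [hc0, hc3, ← Finset.sum_add_distrib]
  have step : ∀ p : Fin n × Fin n, x p * y p * z p + (1 - x p) * (1 - y p) * (1 - z p) =
      1 - x p - y p - z p + x p * y p + y p * z p + z p * x p := fun p => by ring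
  rw [Finset.sum_congr rfl fun p _ => step p]
  simp only [Finset.sum_add_distrib, Finset.sum_sub_distrib]
  have h1 : ∑ _p : Fin n × Fin n, (1:ℤ) = (n:ℤ)^2 := by
    simp [Finset.card_univ]; ring
  have hxs : ∑ p : Fin n × Fin n, x p = a * n := by
    rw [Fintype.sum_prod_type]
    simp only [hx]
    have : ∀ i : Fin n, ∑ _j : Fin n, (if i.val < a then (1:ℤ) else 0) =
        (if i.val < a then (1:ℤ) else 0) * n := by
      intro i; rw [Finset.sum_const]; simp [mul_comm]
    rw [Finset.sum_congr rfl fun i _ => this i, ← Finset.sum_mul, sum_ind_lt n a ha]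
  have hys : ∑ p : Fin n × Fin n, y p = b * n := by
    rw [Fintype.sum_prod_type_right]
    simp only [hy]
    have : ∀ j : Fin n, ∑ _i : Fin n, (if j.val < b then (1:ℤ) else 0) =
        (if j.val < b then (1:ℤ) else 0) * n := by
      intro j; rw [Finset.sum_const]; simp [mul_comm]
    rw [Finset.sum_congr rfl fun j _ => this j, ← Finset.sum_mul, sum_ind_lt n b hb]
  have hzs : ∑ p : Fin n × Fin n, z p = c * n := by
    rw [Fintype.sum_prod_type]
    simp only [hz]
    rw [Finset.sum_congr rfl fun i _ => sum_ind_bij n c hc (L i) (hrow i)]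
    simp; ring
  have hxy : ∑ p : Fin n × Fin n, x p * y p = a * b := by
    rw [Fintype.sum_prod_type]
    simp only [hx, hy]
    have : ∀ i : Fin n, ∑ j : Fin n,
        (if i.val < a then (1:ℤ) else 0) * (if j.val < b then 1 else 0) =
        (if i.val < a then (1:ℤ) else 0) * b := by
      intro i; rw [← Finset.mul_sum, sum_ind_lt n b hb]
    rw [Finset.sum_congr rfl fun i _ => this i, ← Finset.sum_mul, sum_ind_lt n a ha]
  have hyz : ∑ p : Fin n × Fin n, y p * z p = b * c := by
    rw [Fintype.sum_prod_type_right]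
    simp only [hy, hz]
    have : ∀ j : Fin n, ∑ i : Fin n,
        (if j.val < b then (1:ℤ) else 0) * (if (L i j).val < c then 1 else 0) =
        (if j.val < b then (1:ℤ) else 0) * c := by
      intro j
      rw [← Finset.mul_sum, sum_ind_bij n c hc (fun i => L i j) (hcol j)]
    rw [Finset.sum_congr rfl fun j _ => this j, ← Finset.sum_mul, sum_ind_lt n b hb]
  have hzx : ∑ p : Fin n × Fin n, z p * x p = c * a := by
    rw [Fintype.sum_prod_type]
    simp only [hx, hz]
    have : ∀ i : Fin n, ∑ j : Fin n,
        (if (L i j).val < c then (1:ℤ) else 0) * (if i.val < a then 1 else 0) =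
        (c:ℤ) * (if i.val < a then 1 else 0) := by
      intro i
      rw [← Finset.sum_mul, sum_ind_bij n c hc (L i) (hrow i)]
    rw [Finset.sum_congr rfl fun i _ => this i, ← Finset.mul_sum, sum_ind_lt n a ha]
  rw [h1, hxs, hys, hzs, hxy, hyz, hzx]
  ring
end

section
/- Let L : Fin n → Fin n → Fin n be a Latin square, and let a, b, c ≤ n with a + b > n, b + c > n, and a + c > n. Then c₀ + c₃ > 0, where c₀ = |{(i,j) : i < a, j < b, L i j < c}| and c₃ = |{(i,j) : i ≥ a, j ≥ b, L i j ≥ c}|; in particular if additionally a,b,c < n then the capacity n² - (a+b+c)n + (ab+bc+ca) is positive. -/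
lemma card_val_lt (n b : ℕ) (hb : b ≤ n) :
    (Finset.univ.filter fun j : Fin n => j.val < b).card = b := by
  have h : (Finset.univ.filter fun j : Fin n => j.val < b).card = (Finset.range b).card := by
    apply Finset.card_bij (fun j _ => j.val)
    · intro j hj; simpa using (Finset.mem_filter.1 hj).2
    · intro j₁ _ j₂ _ h; exact Fin.val_injective h
    · intro k hk
      have hk' : k < b := Finset.mem_range.1 hk
      exact ⟨⟨k, lt_of_lt_of_le hk' hb⟩, Finset.mem_filter.2 ⟨Finset.mem_univ _, hk'⟩, rfl⟩
  simpa using h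

theorem large_brick_has_rook (n a b c : ℕ) (ha : a ≤ n) (hb : b ≤ n) (hc : c ≤ n)
    (hab : n < a + b) (hbc : n < b + c) (hac : n < a + c)
    (L : Fin n → Fin n → Fin n)
    (hrow : ∀ i, Function.Bijective (L i))
    (hcol : ∀ j, Function.Bijective fun i => L i j) :
    0 < (Finset.univ.filter fun p : Fin n × Fin n =>
          p.1.val < a ∧ p.2.val < b ∧ (L p.1 p.2).val < c).card +
        (Finset.univ.filter fun p : Fin n × Fin n =>
          a ≤ p.1.val ∧ b ≤ p.2.val ∧ c ≤ (L p.1 p.2).val).card ∧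
      (a < n → b < n → c < n →
        0 < (n : ℤ) ^ 2 - ((a : ℤ) + b + c) * n + ((a : ℤ) * b + (b : ℤ) * c + (c : ℤ) * a)) := by
  have hn : 0 < n := by omega
  have hapos : 0 < a := by omega
  constructor
  · -- combinatorial part
    set i : Fin n := ⟨0, hn⟩
    set A : Finset (Fin n) := Finset.univ.filter fun j => j.val < b with hA
    set B : Finset (Fin n) := Finset.univ.filter fun j => (L i j).val < c with hB
    have hAcard : A.card = b := card_val_lt n b hb
    have hBcard : B.card = c := by
      have h : B.card = (Finset.univ.filter fun k : Fin n => k.val < c).card := by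
        apply Finset.card_bij (fun j _ => L i j)
        · intro j hj
          exact Finset.mem_filter.2 ⟨Finset.mem_univ _, by simpa [hB] using (Finset.mem_filter.1 hj).2⟩
        · intro j₁ _ j₂ _ h; exact (hrow i).1 h
        · intro k hk
          obtain ⟨j, hj⟩ := (hrow i).2 k
          exact ⟨j, Finset.mem_filter.2 ⟨Finset.mem_univ _, by
            rw [hj]; simpa using (Finset.mem_filter.1 hk).2⟩, hj⟩
      rw [h, card_val_lt n c hc]
    have hunion : (A ∪ B).card ≤ n := by
      simpa using Finset.card_le_univ (A ∪ B)
    have hinter : 0 < (A ∩ B).card := by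
      have := Finset.card_inter_add_card_union A B
      omega
    obtain ⟨j, hj⟩ := Finset.card_pos.1 hinter
    have hjA : j.val < b := by
      have := Finset.mem_inter.1 hj
      simpa [hA] using (Finset.mem_filter.1 this.1).2
    have hjB : (L i j).val < c := by
      have := Finset.mem_inter.1 hj
      simpa [hB] using (Finset.mem_filter.1 this.2).2
    have : 0 < (Finset.univ.filter fun p : Fin n × Fin n =>
          p.1.val < a ∧ p.2.val < b ∧ (L p.1 p.2).val < c).card :=
      Finset.card_pos.2 ⟨(i, j), Finset.mem_filter.2 ⟨Finset.mem_univ _, hapos, hjA, hjB⟩⟩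
    omega
  · intro h1 h2 h3
    have hcpos : 0 < c := by omega
    have e1 : (0:ℤ) ≤ ((n:ℤ) - a) * ((n:ℤ) - b) := by
      apply mul_nonneg
      · have : (a:ℤ) ≤ n := by exact_mod_cast ha
        linarith
      · have : (b:ℤ) ≤ n := by exact_mod_cast hb
        linarith
    have e2 : (0:ℤ) < (c:ℤ) * ((a:ℤ) + b - n) := by
      apply mul_pos
      · exact_mod_cast hcpos
      · have : (n:ℤ) < (a:ℤ) + b := by exact_mod_cast hab
        linarith
    nlinarith [e1, e2]
end

section
/- Let σ be a permutation of Fin n with n ≥ 1, and let a, b ≤ n. The sum over all rooks of their Hamming distance to the brick T₀ = [0,a)×[0,b) equals (n-a) + (n-b). Here the Hamming distance of the rook (i, σ i) to T₀ is 0 if i < a and σ i < b, 2 if i ≥ a and σ i ≥ b, and 1 otherwise. -/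
theorem distance_theorem_2d (n a b : ℕ) (hn : 1 ≤ n) (ha : a ≤ n) (hb : b ≤ n)
    (σ : Equiv.Perm (Fin n)) :
    ∑ i : Fin n, ((if i.val < a then 0 else 1) + (if (σ i).val < b then 0 else 1)) =
      (n - a) + (n - b) := by
  rw [Finset.sum_add_distrib]
  have key : ∀ c : ℕ, c ≤ n → ∑ i : Fin n, (if i.val < c then 0 else 1) = n - c := by
    intro c hc
    have hcard : (Finset.filter (fun x : Fin n => c ≤ ↑x) Finset.univ).card = n - c := by
      rcases eq_or_lt_of_le hc with h | h
      · subst h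
        have : (Finset.filter (fun x : Fin c => c ≤ ↑x) Finset.univ) = ∅ :=
          Finset.filter_eq_empty_iff.mpr (fun x _ => by have := x.isLt; omega)
        simp [this]
      · have : (Finset.filter (fun x : Fin n => c ≤ ↑x) Finset.univ)
            = Finset.Ici (⟨c, h⟩ : Fin n) := by
          ext x; simp [Fin.le_def]
        rw [this, Fin.card_Ici]
    simp [Finset.sum_ite, Finset.filter_not, Finset.card_sdiff_of_subset (Finset.filter_subset _ _), hcard]
  rw [Equiv.sum_comp σ (fun j : Fin n => if j.val < b then 0 else 1)]
  rw [key a ha, key b hb]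
end

section
/- Let L : Fin n → Fin n → Fin n be a Latin square and a, b, c ≤ n. The sum over all n² rooks (i, j, L i j) of their Hamming distance to the brick T₀ = [0,a)×[0,b)×[0,c) equals n·[(n-a) + (n-b) + (n-c)]. The Hamming distance of a rook to T₀ is the number of coordinates among (i < a), (j < b), (L i j < c) that fail. -/
lemma aux_sum (n c : ℕ) (hc : c ≤ n) :
    ∑ k : Fin n, (if k.val < c then (0:ℕ) else 1) = n - c := by
  classical
  have : ∑ k : Fin n, (if k.val < c then (0:ℕ) else 1)
      = (Finset.univ.filter fun k : Fin n => ¬ k.val < c).card := by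
    rw [Finset.card_filter]
    apply Finset.sum_congr rfl
    intro k _
    by_cases h : k.val < c <;> simp [h]
  rw [this, Finset.filter_not, Finset.card_sdiff_of_subset (Finset.filter_subset _ _)]
  have : (Finset.univ.filter fun k : Fin n => k.val < c).card = c := by
    rw [← Fintype.card_subtype]
    exact Fintype.card_fin_lt_of_le hc
  simp [this]

theorem distance_theorem_3d (n a b c : ℕ) (ha : a ≤ n) (hb : b ≤ n) (hc : c ≤ n)
    (L : Fin n → Fin n → Fin n)
    (hrow : ∀ i, Function.Bijective (L i))
    (hcol : ∀ j, Function.Bijective fun i => L i j) :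
    ∑ i : Fin n, ∑ j : Fin n,
        ((if i.val < a then 0 else 1) + (if j.val < b then 0 else 1) +
          (if (L i j).val < c then 0 else 1)) =
      n * ((n - a) + (n - b) + (n - c)) := by
  have hL : ∀ i : Fin n, ∑ j : Fin n, (if (L i j).val < c then (0:ℕ) else 1) = n - c := by
    intro i
    exact (Fintype.sum_bijective (L i) (hrow i) _ _ (fun j => rfl)).trans (aux_sum n c hc)
  have key : ∀ i : Fin n, ∑ j : Fin n,
      ((if i.val < a then (0:ℕ) else 1) + (if j.val < b then 0 else 1) +
        (if (L i j).val < c then 0 else 1))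
      = n * (if i.val < a then 0 else 1) + (n - b) + (n - c) := by
    intro i
    rw [Finset.sum_add_distrib, Finset.sum_add_distrib, Finset.sum_const,
      aux_sum n b hb, hL i]
    simp [mul_comm]
  simp only [key]
  rw [Finset.sum_add_distrib, Finset.sum_add_distrib, ← Finset.mul_sum,
    aux_sum n a ha]
  simp
  ring
end
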